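/- arXiv:1906.11598 — 3 statements merged into one kernel-verified Lean document; each statement's English description precedes it below -/
import Mathlib

section
/- Let d ≥ 1 and let f satisfy the Shannon inequalities for C*_d. Then [[X_d, B_d, A_d]] ≥ 2^d. -/
open Finset

/-- A finset of vertices is independent: it contains no edge of `G`. -/
def IsIndepSet {V : Type*} (G : SimpleGraph V) (A : Finset V) : Prop :=
  ∀ u ∈ A, ∀ v ∈ A, ¬ G.Adj u v

/-- `f` satisfies the Shannon inequalities for `G`: (a) normalization and
positivity, (b) monotonicity, (c) submodularity, (d) strong monotonicity,
(e) strong submodularity. -/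
structure ShannonIneqs {V : Type*} [DecidableEq V] (G : SimpleGraph V)
    (f : Finset V → ℝ) : Prop where
  empty : f ∅ = 0
  nonneg : ∀ A, 0 ≤ f A
  mono : ∀ A B, A ⊆ B → f A ≤ f B
  submod : ∀ A B, f (A ∩ B) + f (A ∪ B) ≤ f A + f B
  strongMono : ∀ A B, A ⊆ B → IsIndepSet G A → ¬ IsIndepSet G B → f A + 1 ≤ f B
  strongSubmod : ∀ A B, ¬ IsIndepSet G A → ¬ IsIndepSet G B → IsIndepSet G (A ∩ B) →
    1 + f (A ∩ B) + f (A ∪ B) ≤ f A + f B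

/-- Vertices of the `d`-dimensional hypercube. -/
abbrev Cube (d : ℕ) := Fin d → Bool

/-- Hamming weight of a cube vertex. -/
def wt {d : ℕ} (v : Cube d) : ℕ := (univ.filter fun i => v i = true).card

/-- Vertices of `C*_d`: cube vertices (`Sum.inl`) and pendant leaves
(`Sum.inr v = ℓ(v)`, the leaf attached to the cube vertex `v`). -/
abbrev VStar (d : ℕ) := Cube d ⊕ Cube d

/-- The graph `C*_d`: the `d`-dimensional hypercube (vertices of `{0,1}^d`,
edges between vectors differing in exactly one coordinate) together with a
pendant leaf attached to every cube vertex. -/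
def CStar (d : ℕ) : SimpleGraph (VStar d) where
  Adj x y :=
    match x, y with
    | .inl u, .inl v => hammingDist u v = 1
    | .inl u, .inr v => u = v
    | .inr u, .inl v => u = v
    | .inr _, .inr _ => False
  symm := by
    constructor
    rintro (u | u) (v | v) h
    · simpa [hammingDist_comm] using h
    · exact h.symm
    · exact h.symm
    · exact h
  loopless := by
    constructor
    rintro (u | u) h
    · simp at h
    · exact h

/-- `A_d`: the cube vertices of even Hamming weight. -/
def Aset (d : ℕ) : Finset (VStar d) :=
  (univ.filter fun v : Cube d => Even (wt v)).map ⟨Sum.inl, Sum.inl_injective⟩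

/-- `B_d`: the cube vertices of odd Hamming weight. -/
def Bset (d : ℕ) : Finset (VStar d) :=
  (univ.filter fun v : Cube d => ¬ Even (wt v)).map ⟨Sum.inl, Sum.inl_injective⟩

/-- `X_d = A_d ∪ ℓ(B_d)`. -/
def Xset (d : ℕ) : Finset (VStar d) :=
  Aset d ∪ (univ.filter fun v : Cube d => ¬ Even (wt v)).map ⟨Sum.inr, Sum.inr_injective⟩

/-- `[[X,B,A]] = Σ_{b∈B} f(X ∪ {b}) − Σ_{a∈A} f(X ∖ {a})`. -/
def brak {V : Type*} [DecidableEq V] (f : Finset V → ℝ) (X B A : Finset V) : ℝ :=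
  ∑ b ∈ B, f (insert b X) - ∑ a ∈ A, f (X.erase a)

/- ### Auxiliary lemmas -/

lemma even_iff_zmod (n : ℕ) : Even n ↔ (n : ZMod 2) = 0 := by
  rw [even_iff_two_dvd]
  exact (ZMod.natCast_eq_zero_iff n 2).symm

lemma wt_cast {d : ℕ} (v : Cube d) :
    ((wt v : ZMod 2)) = ∑ i : Fin d, (if v i = true then (1 : ZMod 2) else 0) := by
  rw [wt, Finset.card_filter]
  push_cast
  rfl

lemma hamming_parity {d : ℕ} (u v : Cube d) :
    ((hammingDist u v : ZMod 2)) = (wt u : ZMod 2) + (wt v : ZMod 2) := by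
  have h : hammingDist u v = (univ.filter fun i => u i ≠ v i).card := rfl
  rw [h, Finset.card_filter, wt_cast, wt_cast, ← Finset.sum_add_distrib]
  push_cast
  refine Finset.sum_congr rfl fun i _ => ?_
  cases hu : u i <;> cases hv : v i <;> simp [hu, hv] <;> decide

lemma mem_Xset_inl {d : ℕ} (v : Cube d) : Sum.inl v ∈ Xset d ↔ Even (wt v) := by
  simp [Xset, Aset]

lemma mem_Xset_inr {d : ℕ} (v : Cube d) : Sum.inr v ∈ Xset d ↔ ¬ Even (wt v) := by
  simp [Xset, Aset]

lemma indep_Xset (d : ℕ) : IsIndepSet (CStar d) (Xset d) := by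
  rintro (x | x) hx (y | y) hy hadj
  · have hx' := (mem_Xset_inl x).1 hx
    have hy' := (mem_Xset_inl y).1 hy
    have h1 : hammingDist x y = 1 := hadj
    have h2 := hamming_parity x y
    rw [h1, (even_iff_zmod _).1 hx', (even_iff_zmod _).1 hy'] at h2
    simp at h2
  · have hx' := (mem_Xset_inl x).1 hx
    have hy' := (mem_Xset_inr y).1 hy
    have h1 : x = y := hadj
    subst h1; exact hy' hx'
  · have hx' := (mem_Xset_inr x).1 hx
    have hy' := (mem_Xset_inl y).1 hy
    have h1 : x = y := hadj
    subst h1; exact hx' hy'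
  · exact hadj

lemma indep_subset {d : ℕ} {S T : Finset (VStar d)} (h : S ⊆ T)
    (hT : IsIndepSet (CStar d) T) : IsIndepSet (CStar d) S :=
  fun a ha b hb => hT a (h ha) b (h hb)

lemma indep_insert_inr {d : ℕ} {u : Cube d} {S : Finset (VStar d)}
    (hS : IsIndepSet (CStar d) S) (h : Sum.inl u ∉ S) :
    IsIndepSet (CStar d) (insert (Sum.inr u) S) := by
  intro x hx y hy hadj
  rw [Finset.mem_insert] at hx hy
  rcases hx with rfl | hx
  · rcases hy with rfl | hy
    · exact (CStar d).loopless.irrefl _ hadj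
    · rcases y with w | w
      · have h2 : u = w := hadj
        subst h2; exact h hy
      · exact hadj
  · rcases hy with rfl | hy
    · rcases x with w | w
      · have h2 : w = u := hadj
        subst h2; exact h hx
      · exact hadj
    · exact hS x hx y hy hadj

/-- Key pointwise inequality: for even-weight `u` and odd-weight `v`,
`f(X ∖ {u}) + 2 ≤ f(X ∪ {v})`, obtained from two strong submodularities routed
through the leaf `ℓ(u)`, one plain submodularity, and monotonicity. -/
lemma key_ineq {d : ℕ} (f : Finset (VStar d) → ℝ) (hf : ShannonIneqs (CStar d) f)
    {u v : Cube d} (hu : Even (wt u)) (hv : ¬ Even (wt v)) :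
    f ((Xset d).erase (Sum.inl u)) + 2 ≤ f (insert (Sum.inl v) (Xset d)) := by
  set X := Xset d with hX
  have hinlu : Sum.inl u ∈ X := (mem_Xset_inl u).2 hu
  have hinru : Sum.inr u ∉ X := fun h => ((mem_Xset_inr u).1 h) hu
  have hinlv : Sum.inl v ∉ X := fun h => hv ((mem_Xset_inl v).1 h)
  have hinrv : Sum.inr v ∈ X := (mem_Xset_inr v).2 hv
  set E := X.erase (Sum.inl u) with hE
  set S1 := insert (Sum.inl v) X with hS1
  set S2 := insert (Sum.inr u) X with hS2
  set I2 := insert (Sum.inr u) E with hI2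
  set T2 := insert (Sum.inl v) I2 with hT2
  set U := insert (Sum.inl v) S2 with hU
  have hvu : (Sum.inl v : VStar d) ≠ Sum.inr u := by simp
  have hEX : E ⊆ X := Finset.erase_subset _ _
  -- set identities
  have hid1 : S1 ∩ S2 = X := by
    rw [hS1, hS2, Finset.insert_inter_of_notMem
        (by simp only [Finset.mem_insert]; push_neg; exact ⟨hvu, hinlv⟩),
      Finset.inter_insert_of_notMem hinru, Finset.inter_self]
  have hid1u : S1 ∪ S2 = U := by
    rw [hS1, hS2, hU, Finset.insert_union, Finset.union_insert, Finset.union_self]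
  have hid2 : S2 ∩ T2 = I2 := by
    rw [hS2, hT2, Finset.inter_insert_of_notMem
        (by simp only [Finset.mem_insert]; push_neg
            exact ⟨hvu, hinlv⟩),
      hI2, ← Finset.insert_inter_distrib, Finset.inter_eq_right.2 hEX]
  have hid2u : S2 ∪ T2 = U := by
    rw [hS2, hT2, hU, hI2, Finset.union_insert, ← Finset.insert_union_distrib,
      Finset.union_eq_left.2 hEX]
  have hid3 : X ∩ I2 = E := by
    rw [hI2, Finset.inter_insert_of_notMem hinru, Finset.inter_eq_right.2 hEX]
  have hid3u : X ∪ I2 = S2 := by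
    rw [hI2, hS2, Finset.union_insert, Finset.union_eq_left.2 hEX]
  -- independence facts
  have hXind : IsIndepSet (CStar d) X := indep_Xset d
  have hEind : IsIndepSet (CStar d) E := indep_subset hEX hXind
  have hI2ind : IsIndepSet (CStar d) I2 :=
    indep_insert_inr hEind (Finset.notMem_erase _ _)
  have hS1n : ¬ IsIndepSet (CStar d) S1 := fun h =>
    h (Sum.inl v) (Finset.mem_insert_self _ _) (Sum.inr v)
      (Finset.mem_insert_of_mem hinrv) rfl
  have hS2n : ¬ IsIndepSet (CStar d) S2 := fun h =>
    h (Sum.inl u) (Finset.mem_insert_of_mem hinlu) (Sum.inr u)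
      (Finset.mem_insert_self _ _) rfl
  have hT2n : ¬ IsIndepSet (CStar d) T2 := fun h =>
    h (Sum.inl v) (Finset.mem_insert_self _ _) (Sum.inr v)
      (Finset.mem_insert_of_mem (Finset.mem_insert_of_mem
        (Finset.mem_erase.2 ⟨by simp, hinrv⟩))) rfl
  -- the inequalities
  have e1 := hf.strongSubmod S1 S2 hS1n hS2n (by rw [hid1]; exact hXind)
  rw [hid1, hid1u] at e1
  have e2 := hf.strongSubmod S2 T2 hS2n hT2n (by rw [hid2]; exact hI2ind)
  rw [hid2, hid2u] at e2
  have e3 := hf.submod X I2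
  rw [hid3, hid3u] at e3
  have m1 : f T2 ≤ f U := hf.mono T2 U (by
    rw [hT2, hU]
    exact Finset.insert_subset_insert _ (by
      rw [hI2, hS2]; exact Finset.insert_subset_insert _ hEX))
  have m2 : f S2 ≤ f U := hf.mono S2 U (Finset.subset_insert _ _)
  linarith

lemma wt_update_parity {d : ℕ} (j : Fin d) (v : Cube d) :
    ((wt (Function.update v j (!v j)) : ZMod 2)) = (wt v : ZMod 2) + 1 := by
  rw [wt_cast, wt_cast, ← Finset.add_sum_erase _ _ (Finset.mem_univ j),
    ← Finset.add_sum_erase _ (fun i => if v i = true then (1 : ZMod 2) else 0)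
      (Finset.mem_univ j)]
  have hrest : (∑ i ∈ Finset.univ.erase j,
      (if Function.update v j (!v j) i = true then (1 : ZMod 2) else 0)) =
      ∑ i ∈ Finset.univ.erase j, (if v i = true then (1 : ZMod 2) else 0) :=
    Finset.sum_congr rfl fun i hi => by
      rw [Function.update_of_ne (Finset.ne_of_mem_erase hi)]
  rw [hrest, Function.update_self, add_right_comm]
  congr 1
  cases hvj : v j <;> simp [hvj] <;> decide

lemma flip_parity {d : ℕ} (hd : 1 ≤ d) (v : Cube d) :
    Even (wt (Function.update v ⟨0, hd⟩ (!v ⟨0, hd⟩))) ↔ ¬ Even (wt v) := by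
  rw [even_iff_zmod, even_iff_zmod, wt_update_parity]
  generalize ((wt v : ZMod 2)) = x
  revert x; decide

/-- Lemma 2: for `d ≥ 1` and `f` satisfying the Shannon inequalities for `C*_d`,
`[[X_d, B_d, A_d]] ≥ 2^d`. -/
theorem brak_ge_two_pow (d : ℕ) (hd : 1 ≤ d) (f : Finset (VStar d) → ℝ)
    (hf : ShannonIneqs (CStar d) f) :
    (2 : ℝ) ^ d ≤ brak f (Xset d) (Bset d) (Aset d) := by
  classical
  set flip : Cube d → Cube d := fun v => Function.update v ⟨0, hd⟩ (!v ⟨0, hd⟩) with hflip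
  have hflip_parity : ∀ v : Cube d, Even (wt (flip v)) ↔ ¬ Even (wt v) :=
    fun v => flip_parity hd v
  have hflip_invol : ∀ v : Cube d, flip (flip v) = v := by
    intro v
    funext i
    by_cases hij : i = (⟨0, hd⟩ : Fin d)
    · subst hij; simp [hflip]
    · simp [hflip, Function.update_of_ne hij]
  have hmemO : ∀ a : Cube d, a ∈ univ.filter (fun v : Cube d => Even (wt v)) →
      flip a ∈ univ.filter (fun v : Cube d => ¬ Even (wt v)) := by
    intro a ha
    rw [Finset.mem_filter] at ha ⊢
    exact ⟨Finset.mem_univ _, fun h => ((hflip_parity a).1 h) ha.2⟩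
  have hmemE : ∀ a : Cube d, a ∈ univ.filter (fun v : Cube d => ¬ Even (wt v)) →
      flip a ∈ univ.filter (fun v : Cube d => Even (wt v)) := by
    intro a ha
    rw [Finset.mem_filter] at ha ⊢
    exact ⟨Finset.mem_univ _, (hflip_parity a).2 ha.2⟩
  have hsum : brak f (Xset d) (Bset d) (Aset d) =
      ∑ v ∈ univ.filter (fun v : Cube d => ¬ Even (wt v)),
        (f (insert (Sum.inl v) (Xset d)) - f ((Xset d).erase (Sum.inl (flip v)))) := by
    rw [brak, Bset, Aset, Finset.sum_map, Finset.sum_map, Finset.sum_sub_distrib]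
    simp only [Function.Embedding.coeFn_mk]
    congr 1
    refine Finset.sum_nbij' flip flip hmemO hmemE
      (fun a _ => hflip_invol a) (fun a _ => hflip_invol a) ?_
    intro a _
    rw [hflip_invol]
  rw [hsum]
  have hterm : ∀ v ∈ univ.filter (fun v : Cube d => ¬ Even (wt v)), (2 : ℝ) ≤
      f (insert (Sum.inl v) (Xset d)) - f ((Xset d).erase (Sum.inl (flip v))) := by
    intro v hv
    rw [Finset.mem_filter] at hv
    have hkey := key_ineq f hf ((hflip_parity v).2 hv.2) hv.2
    linarith
  have hbound := Finset.sum_le_sum hterm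
  rw [Finset.sum_const, nsmul_eq_mul] at hbound
  refine le_trans (le_of_eq ?_) hbound
  -- card computation: 2 * |odd| = 2 ^ d
  have hcards : (univ.filter (fun v : Cube d => Even (wt v))).card =
      (univ.filter (fun v : Cube d => ¬ Even (wt v))).card :=
    Finset.card_nbij' flip flip hmemO hmemE
      (fun a _ => hflip_invol a) (fun a _ => hflip_invol a)
  have htot : (univ.filter (fun v : Cube d => Even (wt v))).card
      + (univ.filter (fun v : Cube d => ¬ Even (wt v))).card = 2 ^ d := by
    rw [Finset.card_filter_add_card_filter_not]
    simp [Fintype.card_fun]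
  have h2O : (univ.filter (fun v : Cube d => ¬ Even (wt v))).card * 2 = 2 ^ d := by omega
  have := congrArg (fun n : ℕ => (n : ℝ)) h2O
  push_cast at this
  rw [← this]
end

section
/- Consider the path P_4 on four vertices x, b, a, y with edges {x,b}, {b,a}, {a,y}, and let f satisfy the Shannon inequalities for P_4. Then f({a}) + f({b}) ≥ f({a,b,x}) − f({x}) + 1. (This is the base case d = 1 of Lemma 1, since C*_1 is a path of length 3.) -/
/-!
The two edges `{x, b}` and `{b, a}` of the path meet in the independent set `{b}`, so strong
submodularity gives `1 + f {b} + f {x, b, a} ≤ f {x, b} + f {b, a}`; bounding each edge by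
subadditivity, `f {u, v} ≤ f {u} + f {v}`, yields the claim.
-/

open Finset

section

variable {V : Type*} {G : SimpleGraph V}

lemma isIndepSet_singleton (v : V) : IsIndepSet G {v} := by
  intro u hu w hw
  rw [mem_singleton] at hu hw
  subst hu hw
  exact G.irrefl

lemma not_isIndepSet_pair {u v : V} [DecidableEq V] (h : G.Adj u v) :
    ¬ IsIndepSet G {u, v} :=
  fun hind => hind u (mem_insert_self u {v}) v (mem_insert_of_mem (mem_singleton_self v)) h

end

namespace ShannonIneqs

variable {V : Type*} [DecidableEq V] {G : SimpleGraph V} {f : Finset V → ℝ}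

lemma union_le (hf : ShannonIneqs G f) (A B : Finset V) : f (A ∪ B) ≤ f A + f B := by
  linarith [hf.submod A B, hf.nonneg (A ∩ B)]

lemma one_add_le_of_adj_of_adj (hf : ShannonIneqs G f) {x b a : V}
    (hxb : G.Adj x b) (hba : G.Adj b a) (hxa : x ≠ a) :
    1 + f {b} + f {x, b, a} ≤ f {x, b} + f {b, a} := by
  have hinter : ({x, b} : Finset V) ∩ {b, a} = {b} := by
    ext v; simp only [mem_inter, mem_insert, mem_singleton]; grind
  have hunion : ({x, b} : Finset V) ∪ {b, a} = {x, b, a} := by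
    ext v; simp only [mem_union, mem_insert, mem_singleton]; tauto
  have h := hf.strongSubmod {x, b} {b, a} (not_isIndepSet_pair hxb) (not_isIndepSet_pair hba)
    (by rw [hinter]; exact isIndepSet_singleton b)
  rwa [hinter, hunion] at h

lemma add_one_le_of_adj_of_adj (hf : ShannonIneqs G f) {x b a : V}
    (hxb : G.Adj x b) (hba : G.Adj b a) (hxa : x ≠ a) :
    f {x, b, a} - f {x} + 1 ≤ f {a} + f {b} := by
  have hxb_le : f ({x} ∪ {b}) ≤ f {x} + f {b} := hf.union_le {x} {b}
  have hba_le : f ({b} ∪ {a}) ≤ f {b} + f {a} := hf.union_le {b} {a}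
  rw [singleton_union] at hxb_le hba_le
  linarith [hf.one_add_le_of_adj_of_adj hxb hba hxa]

end ShannonIneqs

/-- Base case `d = 1` of Lemma 1: on the path `P_4` with vertices
`x = 0`, `b = 1`, `a = 2`, `y = 3` and edges `{x,b}, {b,a}, {a,y}`, any `f`
satisfying the Shannon inequalities obeys
`f({a}) + f({b}) ≥ f({a,b,x}) − f({x}) + 1`. -/
theorem path_base_case (f : Finset (Fin 4) → ℝ)
    (hf : ShannonIneqs (SimpleGraph.pathGraph 4) f) :
    f {0, 1, 2} - f {0} + 1 ≤ f {2} + f {1} :=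
  hf.add_one_le_of_adj_of_adj (by simp [SimpleGraph.pathGraph_adj])
    (by simp [SimpleGraph.pathGraph_adj]) (by decide)
end

section
/- Let d ≥ 1 and let f satisfy the Shannon inequalities for C*_{d+1}, split into two copies of C*_d by the last cube coordinate. Let b ∈ B_d, let a' ∈ A'_d be the vertex obtained from b by flipping the last coordinate (its partner in the matching M), and let a ∈ A_d be any neighbor of b inside the last-coordinate-0 subcube. Then f(X_d ∪ {b}) − f(X_d) + f(X'_d) − f(X'_d ∖ {a'}) ≥ f(X_d ∪ X'_d ∪ {b}) − f((X_d ∪ X'_d) ∖ {a'}) + 1. -/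
open Finset

/-- Flip the last coordinate of a cube vertex (the matching `M`). -/
def flipLast {d : ℕ} (v : Cube (d + 1)) : Cube (d + 1) :=
  Function.update v (Fin.last d) (!v (Fin.last d))

/-- `A_d` inside `C*_{d+1}`: even-weight cube vertices with last coordinate 0. -/
def A0 (d : ℕ) : Finset (VStar (d + 1)) :=
  (univ.filter fun v : Cube (d + 1) => Even (wt v) ∧ v (Fin.last d) = false).map
    ⟨Sum.inl, Sum.inl_injective⟩

/-- `B_d` inside `C*_{d+1}`: odd-weight cube vertices with last coordinate 0. -/
def B0 (d : ℕ) : Finset (VStar (d + 1)) :=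
  (univ.filter fun v : Cube (d + 1) => ¬ Even (wt v) ∧ v (Fin.last d) = false).map
    ⟨Sum.inl, Sum.inl_injective⟩

/-- `A'_d` inside `C*_{d+1}`: even-weight cube vertices with last coordinate 1. -/
def A1 (d : ℕ) : Finset (VStar (d + 1)) :=
  (univ.filter fun v : Cube (d + 1) => Even (wt v) ∧ v (Fin.last d) = true).map
    ⟨Sum.inl, Sum.inl_injective⟩

/-- `B'_d` inside `C*_{d+1}`: odd-weight cube vertices with last coordinate 1. -/
def B1 (d : ℕ) : Finset (VStar (d + 1)) :=
  (univ.filter fun v : Cube (d + 1) => ¬ Even (wt v) ∧ v (Fin.last d) = true).map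
    ⟨Sum.inl, Sum.inl_injective⟩

/-- `X_d = A_d ∪ ℓ(B_d)` inside `C*_{d+1}` (last coordinate 0 part). -/
def X0 (d : ℕ) : Finset (VStar (d + 1)) :=
  A0 d ∪ (univ.filter fun v : Cube (d + 1) => ¬ Even (wt v) ∧ v (Fin.last d) = false).map
    ⟨Sum.inr, Sum.inr_injective⟩

/-- `X'_d = A'_d ∪ ℓ(B'_d)` inside `C*_{d+1}` (last coordinate 1 part). -/
def X1 (d : ℕ) : Finset (VStar (d + 1)) :=
  A1 d ∪ (univ.filter fun v : Cube (d + 1) => ¬ Even (wt v) ∧ v (Fin.last d) = true).map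
    ⟨Sum.inr, Sum.inr_injective⟩


section GenFinset
variable {V : Type*} [DecidableEq V]

lemma erase_union_left (S T : Finset V) (a : V) (h : a ∉ S) :
    (S ∪ T).erase a = S ∪ T.erase a := by
  ext x
  have h1 : x = a → x ∉ S := fun he => he ▸ h
  simp only [mem_erase, mem_union]; tauto

lemma inter_insert_aux (S T : Finset V) (a b : V) (hST : ∀ x ∈ S, x ∉ T) :
    (insert b (S ∪ T.erase a)) ∩ (insert b T) = insert b (T.erase a) := by
  ext x
  have h1 := hST x
  simp only [mem_inter, mem_insert, mem_union, mem_erase]; tauto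

lemma union_insert_aux (S T : Finset V) (a b : V) :
    (insert b (S ∪ T.erase a)) ∪ (insert b T) = insert b (S ∪ T) := by
  ext x
  simp only [mem_union, mem_insert, mem_erase]; tauto

lemma insert_inter_union_aux (S T : Finset V) (a b : V) (hbS : b ∉ S) (hbT : b ∉ T) :
    (insert b S) ∩ (S ∪ T.erase a) = S := by
  ext x
  have h1 : x = b → x ∉ S := fun he => he ▸ hbS
  have h2 : x = b → x ∉ T := fun he => he ▸ hbT
  simp only [mem_inter, mem_insert, mem_union, mem_erase]; tauto

lemma insert_union_union_aux (S T : Finset V) (a b : V) :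
    (insert b S) ∪ (S ∪ T.erase a) = insert b (S ∪ T.erase a) := by
  ext x
  simp only [mem_union, mem_insert, mem_erase]; tauto

lemma inter_insert_erase_aux (T : Finset V) (a b : V) (hbT : b ∉ T) :
    T ∩ (insert b (T.erase a)) = T.erase a := by
  ext x
  have h2 : x = b → x ∉ T := fun he => he ▸ hbT
  simp only [mem_inter, mem_insert, mem_erase]; tauto

lemma union_insert_erase_aux (T : Finset V) (a b : V) :
    T ∪ (insert b (T.erase a)) = insert b T := by
  ext x
  by_cases hxa : x = a <;> simp only [mem_union, mem_insert, mem_erase] <;> tauto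

end GenFinset

section AuxLemmas

lemma dist_cast {n : ℕ} (u v : Cube n) :
    (hammingDist u v : ZMod 2) = ((wt u + wt v : ℕ) : ZMod 2) := by
  unfold hammingDist wt
  rw [Finset.card_filter, Finset.card_filter, Finset.card_filter]
  push_cast
  rw [← Finset.sum_add_distrib]
  refine Finset.sum_congr rfl fun i _ => ?_
  cases hu : u i <;> cases hv : v i <;> simp <;> decide

lemma not_dist_one {n : ℕ} {u v : Cube n} (hu : Even (wt u)) (hv : Even (wt v)) :
    hammingDist u v ≠ 1 := by
  intro h
  have h2 := dist_cast u v
  rw [h] at h2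
  have hz : ((wt u + wt v : ℕ) : ZMod 2) = 0 := by
    rw [ZMod.natCast_eq_zero_iff]
    exact (hu.add hv).two_dvd
  rw [hz] at h2
  simp at h2

lemma flipLast_last {d : ℕ} (b : Cube (d + 1)) :
    flipLast b (Fin.last d) = !b (Fin.last d) := by
  simp [flipLast]

lemma wt_flipLast {d : ℕ} {b : Cube (d + 1)} (hbl : b (Fin.last d) = false) :
    wt (flipLast b) = wt b + 1 := by
  unfold wt
  have hset : (univ.filter fun i => flipLast b i = true)
      = insert (Fin.last d) (univ.filter fun i => b i = true) := by
    ext i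
    by_cases hi : i = Fin.last d <;>
      simp [flipLast, Function.update_apply, hi, hbl]
  rw [hset, Finset.card_insert_of_notMem (by simp [hbl])]

lemma dist_flipLast {d : ℕ} (b : Cube (d + 1)) : hammingDist b (flipLast b) = 1 := by
  have hset : (univ.filter fun i => b i ≠ flipLast b i) = ({Fin.last d} : Finset _) := by
    ext i
    by_cases hi : i = Fin.last d <;>
      simp [flipLast, Function.update_apply, hi]
  show (univ.filter fun i => b i ≠ flipLast b i).card = 1
  rw [hset]; simp

lemma eq_flipLast_of_dist_one {d : ℕ} {b w : Cube (d + 1)} (h : hammingDist b w = 1)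
    (hl : b (Fin.last d) ≠ w (Fin.last d)) : w = flipLast b := by
  have hcard : (Finset.univ.filter fun i => b i ≠ w i).card = 1 := h
  have hmem : Fin.last d ∈ Finset.univ.filter (fun i => b i ≠ w i) := by simp [hl]
  obtain ⟨j, hj⟩ := Finset.card_eq_one.mp hcard
  have hjl : j = Fin.last d := by rw [hj, Finset.mem_singleton] at hmem; exact hmem.symm
  subst hjl
  funext i
  by_cases hi : i = Fin.last d
  · subst hi
    have hw : w (Fin.last d) = !b (Fin.last d) := by
      cases hb' : b (Fin.last d) <;> cases hw' : w (Fin.last d) <;> simp_all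
    simp [flipLast, hw]
  · have hni : i ∉ Finset.univ.filter (fun i => b i ≠ w i) := by
      rw [hj]; simp [hi]
    have hbw : b i = w i := by simpa using hni
    simp [flipLast, Function.update_apply, hi, ← hbw]

lemma mem_X0_inl {d : ℕ} {v : Cube (d + 1)} :
    (Sum.inl v : VStar (d + 1)) ∈ X0 d ↔ Even (wt v) ∧ v (Fin.last d) = false := by
  simp [X0, A0]

lemma mem_X0_inr {d : ℕ} {v : Cube (d + 1)} :
    (Sum.inr v : VStar (d + 1)) ∈ X0 d ↔ ¬ Even (wt v) ∧ v (Fin.last d) = false := by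
  simp [X0, A0]

lemma mem_X1_inl {d : ℕ} {v : Cube (d + 1)} :
    (Sum.inl v : VStar (d + 1)) ∈ X1 d ↔ Even (wt v) ∧ v (Fin.last d) = true := by
  simp [X1, A1]

lemma mem_X1_inr {d : ℕ} {v : Cube (d + 1)} :
    (Sum.inr v : VStar (d + 1)) ∈ X1 d ↔ ¬ Even (wt v) ∧ v (Fin.last d) = true := by
  simp [X1, A1]

end AuxLemmas

/-- Inequality (8) of the paper, for `C*_{d+1}` split into two copies of `C*_d`
by the last cube coordinate: for `b ∈ B_d` with matching partner
`a' = flipLast b ∈ A'_d` and any neighbor `a ∈ A_d` of `b` in the bottom subcube,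
`f(bX_d) − f(X_d) + f(X'_d) − f(X'_d ∖ a') ≥ f(bX_dX'_d) − f(X_dX'_d ∖ a') + 1`. -/

theorem split_edge_ineq (d : ℕ) (hd : 1 ≤ d) (f : Finset (VStar (d + 1)) → ℝ)
    (hf : ShannonIneqs (CStar (d + 1)) f)
    (b : Cube (d + 1)) (hb : ¬ Even (wt b)) (hbl : b (Fin.last d) = false)
    (a : Cube (d + 1)) (ha : Even (wt a)) (hal : a (Fin.last d) = false)
    (hab : hammingDist a b = 1) :
    f (insert (Sum.inl b) (X0 d ∪ X1 d)) -
        f ((X0 d ∪ X1 d).erase (Sum.inl (flipLast b))) + 1 ≤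
      f (insert (Sum.inl b) (X0 d)) - f (X0 d) +
        f (X1 d) - f ((X1 d).erase (Sum.inl (flipLast b))) := by
  classical
  set a' : VStar (d + 1) := Sum.inl (flipLast b) with ha'def
  have hfll : flipLast b (Fin.last d) = true := by rw [flipLast_last, hbl]; rfl
  have hwa' : Even (wt (flipLast b)) := by
    rw [wt_flipLast hbl]; exact Nat.even_add_one.mpr hb
  have ha'X1 : a' ∈ X1 d := mem_X1_inl.mpr ⟨hwa', hfll⟩
  have hbX0 : (Sum.inl b : VStar (d + 1)) ∉ X0 d := fun h => hb (mem_X0_inl.mp h).1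
  have hbX1 : (Sum.inl b : VStar (d + 1)) ∉ X1 d := by
    intro h
    have h2 := (mem_X1_inl.mp h).2
    rw [hbl] at h2
    simp at h2
  have hlbX0 : (Sum.inr b : VStar (d + 1)) ∈ X0 d := mem_X0_inr.mpr ⟨hb, hbl⟩
  have hdisj : ∀ x : VStar (d + 1), x ∈ X0 d → x ∉ X1 d := by
    rintro (v | v) h0 h1
    · have h2 := (mem_X0_inl.mp h0).2
      have h3 := (mem_X1_inl.mp h1).2
      rw [h2] at h3; simp at h3
    · have h2 := (mem_X0_inr.mp h0).2
      have h3 := (mem_X1_inr.mp h1).2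
      rw [h2] at h3; simp at h3
  have ha'X0 : a' ∉ X0 d := by
    intro h
    have h2 := (mem_X0_inl.mp h).2
    rw [hfll] at h2
    simp at h2
  -- set identities
  have E1 : (X0 d ∪ X1 d).erase a' = X0 d ∪ (X1 d).erase a' :=
    erase_union_left _ _ _ ha'X0
  have E2 : (insert (Sum.inl b) (X0 d ∪ (X1 d).erase a'))
      ∩ (insert (Sum.inl b) (X1 d)) = insert (Sum.inl b) ((X1 d).erase a') :=
    inter_insert_aux _ _ _ _ hdisj
  have E3 : (insert (Sum.inl b) (X0 d ∪ (X1 d).erase a'))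
      ∪ (insert (Sum.inl b) (X1 d)) = insert (Sum.inl b) (X0 d ∪ X1 d) :=
    union_insert_aux _ _ _ _
  have E4 : (insert (Sum.inl b) (X0 d)) ∩ (X0 d ∪ (X1 d).erase a') = X0 d :=
    insert_inter_union_aux _ _ _ _ hbX0 hbX1
  have E5 : (insert (Sum.inl b) (X0 d)) ∪ (X0 d ∪ (X1 d).erase a')
      = insert (Sum.inl b) (X0 d ∪ (X1 d).erase a') :=
    insert_union_union_aux _ _ _ _
  have E6 : X1 d ∩ (insert (Sum.inl b) ((X1 d).erase a')) = (X1 d).erase a' :=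
    inter_insert_erase_aux _ _ _ hbX1
  have E7 : X1 d ∪ (insert (Sum.inl b) ((X1 d).erase a')) = insert (Sum.inl b) (X1 d) :=
    union_insert_erase_aux _ _ _
  -- independence facts
  have hX1ind : ∀ u ∈ X1 d, ∀ v ∈ X1 d, ¬ (CStar (d + 1)).Adj u v := by
    rintro (u | u) hu (v | v) hv hadj
    · exact not_dist_one (mem_X1_inl.mp hu).1 (mem_X1_inl.mp hv).1 hadj
    · have he : u = v := hadj
      exact (mem_X1_inr.mp hv).1 (he ▸ (mem_X1_inl.mp hu).1)
    · have he : u = v := hadj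
      exact (mem_X1_inr.mp hu).1 (he ▸ (mem_X1_inl.mp hv).1)
    · exact hadj
  have hbkey : ∀ v ∈ (X1 d).erase a', ¬ (CStar (d + 1)).Adj (Sum.inl b) v := by
    rintro (v | v) hv hadj
    · obtain ⟨hne, hvX⟩ := Finset.mem_erase.mp hv
      obtain ⟨hev, hvl⟩ := mem_X1_inl.mp hvX
      have hd1 : hammingDist b v = 1 := hadj
      have hvf : v = flipLast b := by
        refine eq_flipLast_of_dist_one hd1 ?_
        rw [hbl, hvl]
        simp
      exact hne (by rw [hvf])
    · obtain ⟨hne, hvX⟩ := Finset.mem_erase.mp hv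
      obtain ⟨hodd, hvl⟩ := mem_X1_inr.mp hvX
      have he : b = v := hadj
      rw [he, hvl] at hbl
      simp at hbl
  have hIndep : IsIndepSet (CStar (d + 1)) (insert (Sum.inl b) ((X1 d).erase a')) := by
    intro u hu v hv hadj
    rcases Finset.mem_insert.mp hu with rfl | hu'
    · rcases Finset.mem_insert.mp hv with rfl | hv'
      · exact (CStar (d + 1)).loopless.irrefl _ hadj
      · exact hbkey v hv' hadj
    · rcases Finset.mem_insert.mp hv with rfl | hv'
      · exact hbkey u hu' ((CStar (d + 1)).symm.symm _ _ hadj)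
      · exact hX1ind u (Finset.mem_of_mem_erase hu') v (Finset.mem_of_mem_erase hv') hadj
  have hnA : ¬ IsIndepSet (CStar (d + 1)) (insert (Sum.inl b) (X0 d ∪ (X1 d).erase a')) := by
    intro h
    exact h (Sum.inl b) (mem_insert_self _ _) (Sum.inr b)
      (mem_insert_of_mem (mem_union_left _ hlbX0)) rfl
  have hnB : ¬ IsIndepSet (CStar (d + 1)) (insert (Sum.inl b) (X1 d)) := by
    intro h
    exact h (Sum.inl b) (mem_insert_self _ _) a'
      (mem_insert_of_mem ha'X1) (dist_flipLast b)
  have I := hf.strongSubmod (insert (Sum.inl b) (X0 d ∪ (X1 d).erase a'))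
    (insert (Sum.inl b) (X1 d)) hnA hnB (by rw [E2]; exact hIndep)
  rw [E2, E3] at I
  have II := hf.submod (insert (Sum.inl b) (X0 d)) (X0 d ∪ (X1 d).erase a')
  rw [E4, E5] at II
  have III := hf.submod (X1 d) (insert (Sum.inl b) ((X1 d).erase a'))
  rw [E6, E7] at III
  rw [E1]
  linarith
end
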